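/- arXiv:0912.1964 — 3 statements merged into one kernel-verified Lean document; each statement's English description precedes it below -/
import Mathlib

section
/- Let C₁, ..., C_r be nontrivial finite cyclic groups. Then the derived length of the ascending iterated standard wreath product (···(C₁ ≀ C₂) ≀ ···) ≀ C_r equals r. -/
/-!
If `G` is abelian, `(H ≀ G)'` lies in the base group `G → H`, hence `(H ≀ G)⁽ⁿ⁺¹⁾ ≤ (H⁽ⁿ⁾)^G`.
If `g ≠ 1`, the commutators `⁅inl f, inr g⁆` with `f` supported at `1` show that evaluation at `1`
maps the part of `(H ≀ G)'` inside the base group onto `H`, hence `(H ≀ G)⁽ⁿ⁺¹⁾` contains a copy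
of a group whose `n`-th derived subgroup maps onto `H⁽ⁿ⁾`. So wreathing with a nontrivial abelian
group raises the derived length by exactly one, and the theorem follows from `dl C₁ = 1`.
-/
/-- The automorphism action of `G` on `G → H` by right translation:
`(wrAut H G g) f x = f (x * g)`, so that the semidirect product below has
multiplication `(f₁, g₁)(f₂, g₂) = (f₁ · f₂^{g₁⁻¹}, g₁g₂)` with
`f₂^{g₁⁻¹}(x) = f₂ (x * g₁)`. -/
def wrAut (H G : Type*) [Group H] [Group G] : G →* MulAut (G → H) where
  toFun g :=
    { toFun := fun f x => f (x * g)
      invFun := fun f x => f (x * g⁻¹)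
      left_inv := fun f => funext fun x => by simp [mul_assoc]
      right_inv := fun f => funext fun x => by simp [mul_assoc]
      map_mul' := fun f₁ f₂ => rfl }
  map_one' := MulEquiv.ext fun f => funext fun x => by simp
  map_mul' := fun g₁ g₂ => MulEquiv.ext fun f => funext fun x => by simp [mul_assoc]

/-- The standard (regular) wreath product `H ≀ G`. -/
abbrev Wr (H G : Type*) [Group H] [Group G] := SemidirectProduct (G → H) G (wrAut H G)

/-- The standard wreath product of bundled groups. -/
def WrGrp (H G : GrpCat.{u}) : GrpCat.{u} := GrpCat.of (Wr H G)

/-- Descending iterated standard wreath product `C₁ ≀ (C₂ ≀ (⋯ ≀ C_r)⋯)`,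
given by a head group and the list of remaining groups. -/
def descW : GrpCat.{u} → List GrpCat.{u} → GrpCat.{u}
  | G, [] => G
  | G, H :: t => WrGrp G (descW H t)

/-- Ascending iterated standard wreath product `(⋯(C₁ ≀ C₂) ≀ ⋯) ≀ C_r`,
given by a head group and the list of remaining groups. -/
def ascW : GrpCat.{u} → List GrpCat.{u} → GrpCat.{u}
  | G, [] => G
  | G, H :: t => ascW (WrGrp G H) t

/-- Minimal number of generators of a group. -/
noncomputable def mingen (G : Type*) [Group G] : ℕ :=
  sInf {n | ∃ S : Finset G, S.card = n ∧ Subgroup.closure (S : Set G) = ⊤}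

/-- `d(G)`: minimal size of a subset whose normal closure is all of `G`. -/
noncomputable def dgen (G : Type*) [Group G] : ℕ :=
  sInf {n | ∃ S : Finset G, S.card = n ∧ Subgroup.normalClosure (S : Set G) = ⊤}

/-- Derived length: the least `n` with `derivedSeries G n = ⊥`. -/
noncomputable def dl (G : Type*) [Group G] : ℕ :=
  sInf {n | derivedSeries G n = ⊥}


open SemidirectProduct Subgroup
open scoped commutatorElement

section DerivedSeries

variable {X A : Type*} [Group X] [Group A]

lemma derivedSeries_succ_le_map_of_commutator_le_range (f : A →* X)
    (hf : commutator X ≤ f.range) (n : ℕ) :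
    derivedSeries X (n + 1) ≤ (derivedSeries A n).map f := by
  induction n with
  | zero => rwa [derivedSeries_zero, ← MonoidHom.range_eq_map]
  | succ n ih =>
    rw [derivedSeries_succ X (n + 1), derivedSeries_succ A n, map_commutator]
    exact commutator_mono ih ih

lemma map_derivedSeries_le_derivedSeries_succ_of_range_le_commutator (f : A →* X)
    (hf : f.range ≤ commutator X) (n : ℕ) :
    (derivedSeries A n).map f ≤ derivedSeries X (n + 1) := by
  induction n with
  | zero => rwa [derivedSeries_zero, ← MonoidHom.range_eq_map]
  | succ n ih =>
    rw [derivedSeries_succ X (n + 1), derivedSeries_succ A n, map_commutator]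
    exact commutator_mono ih ih

lemma derivedSeries_pi_eq_bot {ι : Type*} {n : ℕ} (h : derivedSeries X n = ⊥) :
    derivedSeries (ι → X) n = ⊥ := by
  refine (eq_bot_iff_forall _).mpr fun f hf => funext fun i => ?_
  have hfi : f i ∈ (derivedSeries (ι → X) n).map (Pi.evalMonoidHom (fun _ => X) i) :=
    ⟨f, hf, rfl⟩
  rw [Pi.one_apply, ← mem_bot, ← h]
  exact map_derivedSeries_le_derivedSeries _ n hfi

end DerivedSeries

section Wreath

variable {H G : Type*} [Group H] [Group G]

lemma commutator_wr_le_range_inl [IsMulCommutative G] :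
    commutator (Wr H G) ≤ (inl : (G → H) →* Wr H G).range := by
  rw [range_inl_eq_ker_rightHom, commutator_def, commutator_le]
  intro a _ b _
  rw [MonoidHom.mem_ker, map_commutatorElement, commutatorElement_eq_one_iff_mul_comm]
  exact IsMulCommutative.is_comm.comm _ _

lemma commutatorElement_inl_inr (f : G → H) (g : G) :
    ⁅(inl f : Wr H G), (inr g : Wr H G)⁆ = (inl fun x => f x * (f (x * g))⁻¹ : Wr H G) := by
  rw [commutatorElement_def]
  ext x <;> simp only [mul_left, mul_right, inv_left, inv_right, left_inl, right_inl,
    left_inr, right_inr] <;> simp [wrAut]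

lemma derivedSeries_wr_succ_eq_bot [IsMulCommutative G] {n : ℕ} (h : derivedSeries H n = ⊥) :
    derivedSeries (Wr H G) (n + 1) = ⊥ := by
  rw [eq_bot_iff]
  refine (derivedSeries_succ_le_map_of_commutator_le_range _ commutator_wr_le_range_inl n).trans ?_
  rw [derivedSeries_pi_eq_bot h, Subgroup.map_bot]

lemma derivedSeries_wr_succ_ne_bot {g : G} (hg : g ≠ 1) {n : ℕ} (h : derivedSeries H n ≠ ⊥) :
    derivedSeries (Wr H G) (n + 1) ≠ ⊥ := by
  set B := (commutator (Wr H G)).comap (inl : (G → H) →* Wr H G)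
  have hq : Function.Surjective ((Pi.evalMonoidHom (fun _ => H) 1).comp B.subtype) := by
    intro a
    classical
    -- `⁅inl f, inr g⁆` takes the value `a` at `1` because `g ≠ 1`.
    let f : G → H := Pi.mulSingle 1 a
    refine ⟨⟨fun x => f x * (f (x * g))⁻¹, ?_⟩, ?_⟩
    · rw [mem_comap, ← commutatorElement_inl_inr]
      exact commutator_mem_commutator (mem_top _) (mem_top _)
    · simp [f, hg]
  have hrange : (inl.comp B.subtype : B →* Wr H G).range ≤ commutator (Wr H G) := by
    rintro _ ⟨b, rfl⟩
    exact b.2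
  intro hbot
  apply h
  rw [eq_bot_iff]
  refine (derivedSeries_le_map_derivedSeries hq n).trans ?_
  have hB : (derivedSeries B n).map (inl.comp B.subtype : B →* Wr H G) = ⊥ := by
    rw [eq_bot_iff, ← hbot]
    exact map_derivedSeries_le_derivedSeries_succ_of_range_le_commutator _ hrange n
  have hinj : Function.Injective (inl.comp B.subtype : B →* Wr H G) :=
    inl_injective.comp B.subtype_injective
  rw [(map_eq_bot_iff_of_injective _ hinj).mp hB, Subgroup.map_bot]

end Wreath

lemma dl_eq_succ_iff {X : Type*} [Group X] (n : ℕ) :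
    dl X = n + 1 ↔ derivedSeries X (n + 1) = ⊥ ∧ derivedSeries X n ≠ ⊥ :=
  Nat.sInf_upward_closed_eq_succ_iff
    (fun _ _ hle hbot => eq_bot_iff.mpr (hbot ▸ derivedSeries_antitone X hle)) n

lemma dl_eq_one {X : Type*} [Group X] [IsMulCommutative X] [Nontrivial X] : dl X = 1 :=
  (dl_eq_succ_iff 0).mpr ⟨(_root_.commutator_eq_bot_iff X).mpr ‹_›, top_ne_bot⟩

lemma dl_wr {H G : Type*} [Group H] [Group G] [IsMulCommutative G] [Nontrivial G] {n : ℕ}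
    (h : dl H = n + 1) : dl (Wr H G) = n + 2 := by
  obtain ⟨hsucc, hn⟩ := (dl_eq_succ_iff n).mp h
  obtain ⟨g, hg⟩ := exists_ne (1 : G)
  exact (dl_eq_succ_iff (n + 1)).mpr
    ⟨derivedSeries_wr_succ_eq_bot hsucc, derivedSeries_wr_succ_ne_bot hg hn⟩

lemma dl_ascW {G : GrpCat.{u}} {n : ℕ} (hG : dl G = n + 1) (l : List GrpCat.{u})
    (hl : ∀ H ∈ l, IsMulCommutative H ∧ Nontrivial H) :
    dl (ascW G l) = n + 1 + l.length := by
  induction l generalizing G n with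
  | nil => exact hG
  | cons H t ih =>
    obtain ⟨_, _⟩ := hl H List.mem_cons_self
    rw [ascW, ih (dl_wr hG) fun H' hH' => hl H' (List.mem_cons_of_mem _ hH'), List.length_cons]
    omega

/-- The derived length of an ascending iterated standard wreath
product of `r` nontrivial finite cyclic groups (head `C₁` and tail list of length
`r - 1`) is exactly `r`. -/
theorem stmt11 (C₁ : GrpCat.{u}) (l : List GrpCat.{u})
    (h : ∀ H ∈ C₁ :: l, Finite H ∧ IsCyclic H ∧ Nontrivial H) :
    dl (ascW C₁ l) = l.length + 1 := by
  have habelian : ∀ H ∈ C₁ :: l, IsMulCommutative H ∧ Nontrivial H := fun H hH =>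
    let ⟨_, _, hH⟩ := h H hH
    ⟨inferInstance, hH⟩
  obtain ⟨_, _⟩ := habelian C₁ List.mem_cons_self
  rw [dl_ascW (n := 0) dl_eq_one l fun H hH => habelian H (List.mem_cons_of_mem _ hH)]
  omega
end

section
/- Every finite semiabelian group is a surjective homomorphic image of a descending iterated standard wreath product of finite cyclic groups, i.e., for every finite semiabelian G there exist finite cyclic groups C₁, ..., C_r and an epimorphism C₁ ≀ (C₂ ≀ (··· ≀ C_r)···) → G. -/
/-- The class of finite semiabelian groups: the smallest class of (bundled) finite
groups containing all finite abelian groups, closed under quotients (hence under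
isomorphism), and closed under forming semidirect products `A ⋊ G` with `A` finite
abelian and `G` in the class. -/
inductive IsSemiabelian : GrpCat.{u} → Prop
  | of_abelian (G : GrpCat.{u}) (hfin : Finite G) (h : ∀ x y : G, x * y = y * x) :
      IsSemiabelian G
  | of_quotient (G H : GrpCat.{u}) (f : G →* H) (hf : Function.Surjective f)
      (hG : IsSemiabelian G) : IsSemiabelian H
  | of_semidirect (G : GrpCat.{u}) (A : Type u) [CommGroup A] (hA : Finite A)
      (φ : G →* MulAut A) (hG : IsSemiabelian G) :
      IsSemiabelian (GrpCat.of (A ⋊[φ] G))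


/-! Quotients of iterated wreath products `C₁ ≀ (C₂ ≀ (⋯ ≀ C_r))` of finite cyclic groups form a
class closed under quotients, so it suffices that it contains the finite abelian groups and is
closed under `A ⋊ G` for `A` finite abelian. Now `A ⋊ G` is a quotient of `A ≀ G` via
`(f, g) ↦ (∏ₓ x⁻¹ • f x, g)`; `A` is a quotient of a product of cyclic groups `Z × P`, and
`(Z × P) ≀ G` is a quotient of `Z ≀ (P ≀ G)`. Finally, if `W ↠ G` then `Z ≀ W ↠ Z ≀ G` for
abelian `Z`, by multiplying the values of `f : W → Z` along the fibres of `W ↠ G`. -/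

open Function SemidirectProduct

instance {N G : Type*} [Group N] [Group G] {φ : G →* MulAut N} [Finite N] [Finite G] :
    Finite (N ⋊[φ] G) :=
  Finite.of_equiv _ equivProd.symm

theorem SemidirectProduct.map_surjective {N₁ G₁ N₂ G₂ : Type*} [Group N₁] [Group G₁] [Group N₂]
    [Group G₂] {φ₁ : G₁ →* MulAut N₁} {φ₂ : G₂ →* MulAut N₂} {fn : N₁ →* N₂} {fg : G₁ →* G₂}
    (h : ∀ g : G₁, fn.comp (φ₁ g).toMonoidHom = (φ₂ (fg g)).toMonoidHom.comp fn)
    (hn : Surjective fn) (hg : Surjective fg) : Surjective (map fn fg h) := by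
  rintro ⟨n, g⟩
  obtain ⟨n, rfl⟩ := hn n
  obtain ⟨g, rfl⟩ := hg g
  exact ⟨⟨n, g⟩, rfl⟩

theorem finite_descW (C : GrpCat.{u}) (l : List GrpCat.{u}) (h : ∀ H ∈ C :: l, Finite H) :
    Finite (descW C l) := by
  induction l generalizing C with
  | nil => exact h C List.mem_cons_self
  | cons H t ih =>
    have := h C List.mem_cons_self
    have := ih H fun K hK => h K (List.mem_cons_of_mem C hK)
    exact inferInstanceAs (Finite (Wr C (descW H t)))

section FiberProd

variable {V W Z : Type*} [CommGroup Z] [Fintype V] [DecidableEq W]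

def fiberProd (ρ : V → W) : (V → Z) →* (W → Z) where
  toFun f w := ∏ v : {v : V // ρ v = w}, f v
  map_one' := funext fun _ => Finset.prod_const_one
  map_mul' _ _ := funext fun _ => Finset.prod_mul_distrib

theorem fiberProd_wrAut [Group V] [Group W] (ρ : V →* W) (v : V) (f : V → Z) :
    fiberProd ρ (wrAut Z V v f) = wrAut Z W (ρ v) (fiberProd ρ f) :=
  funext fun _ => Fintype.prod_equiv ((Equiv.mulRight v).subtypeEquiv fun _ => by simp)
    _ _ fun _ => rfl

theorem fiberProd_surjective {ρ : V → W} (hρ : Surjective ρ) :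
    Surjective (fiberProd (Z := Z) ρ) := by
  classical
  intro g
  -- put all the mass of each fibre on the chosen point `surjInv hρ w`
  refine ⟨fun v => if v = surjInv hρ (ρ v) then g (ρ v) else 1, funext fun w => ?_⟩
  refine (Fintype.prod_eq_single ⟨surjInv hρ w, surjInv_eq hρ w⟩ ?_).trans ?_
  · rintro ⟨v, rfl⟩ hv
    exact if_neg fun h => hv (Subtype.ext h)
  · simp [surjInv_eq hρ w]

end FiberProd

namespace Wr

section Pushforward

variable {Z V W : Type*} [CommGroup Z] [Group V] [Group W] [Fintype V] [DecidableEq W]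

def pushforward (ρ : V →* W) : Wr Z V →* Wr Z W :=
  map (fiberProd ρ) ρ fun v => MonoidHom.ext (fiberProd_wrAut ρ v)

theorem pushforward_surjective {ρ : V →* W} (hρ : Surjective ρ) :
    Surjective (pushforward (Z := Z) ρ) :=
  map_surjective _ (fiberProd_surjective hρ) hρ

end Pushforward

section MapLeft

variable {Z Z' : Type*} [Group Z] [Group Z'] (W : Type*) [Group W]

def mapLeft (q : Z →* Z') : Wr Z W →* Wr Z' W :=
  map (q.compLeft W) (MonoidHom.id W) fun _ => rfl

theorem mapLeft_surjective {q : Z →* Z'} (hq : Surjective q) : Surjective (mapLeft W q) :=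
  map_surjective _ (fun f => ⟨surjInv hq ∘ f, funext fun w => surjInv_eq hq (f w)⟩)
    surjective_id

end MapLeft

section WrProd

variable (Z P W : Type*) [CommGroup Z] [Group P] [Group W] [Fintype (Wr P W)] [DecidableEq W]

def wrProd : Wr Z (Wr P W) →* Wr (Z × P) W where
  toFun x := ⟨fun w => (fiberProd rightHom x.left w, x.right.left w), x.right.right⟩
  map_one' := SemidirectProduct.ext (funext fun w => Prod.ext (congrFun (map_one _) w) rfl) rfl
  map_mul' x y := SemidirectProduct.ext
    (funext fun w => Prod.ext
      (by
        simp only [mul_left, map_mul, fiberProd_wrAut]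
        rfl)
      rfl)
    rfl

theorem wrProd_surjective : Surjective (wrProd Z P W) := by
  rintro ⟨h, w⟩
  obtain ⟨f, hf⟩ := fiberProd_surjective (Z := Z) (rightHom_surjective (φ := wrAut P W))
    (fun w' => (h w').1)
  exact ⟨⟨f, ⟨fun w' => (h w').2, w⟩⟩,
    SemidirectProduct.ext (funext fun w' => Prod.ext (congrFun hf w') rfl) rfl⟩

end WrProd

section ToSemidirectProduct

variable {A G : Type*} [CommGroup A] [Group G] [Fintype G] (φ : G →* MulAut A)

def twistedProd : (G → A) →* A where
  toFun f := ∏ g, (φ g)⁻¹ (f g)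
  map_one' := by simp
  map_mul' f f' := by simp [Finset.prod_mul_distrib]

theorem twistedProd_wrAut (g : G) (f : G → A) :
    twistedProd φ (wrAut A G g f) = φ g (twistedProd φ f) := by
  simp only [twistedProd, MonoidHom.coe_mk, OneHom.coe_mk, map_prod]
  exact Fintype.prod_equiv (Equiv.mulRight g) _ _ fun v => by
    simp [wrAut, map_mul, MulAut.mul_apply]

def toSemidirectProduct : Wr A G →* A ⋊[φ] G :=
  lift (inl.comp (twistedProd φ)) inr fun g => by
    ext f <;> simp [twistedProd_wrAut]

theorem toSemidirectProduct_surjective : Surjective (toSemidirectProduct φ) := by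
  classical
  intro x
  refine ⟨inl (Pi.mulSingle 1 x.left) * inr x.right, ?_⟩
  have : twistedProd φ (Pi.mulSingle 1 x.left) = x.left :=
    (Fintype.prod_eq_single 1 fun g hg => by simp [hg]).trans (by simp)
  simp [toSemidirectProduct, this, inl_left_mul_inr_right]

end ToSemidirectProduct

end Wr

theorem Subgroup.exists_prod_surjective_sup {A : Type*} [CommGroup A] (S T : Subgroup A) :
    ∃ f : S × T →* ↥(S ⊔ T), Surjective f := by
  refine ⟨(S.subtype.coprod T.subtype).codRestrict _ fun p => mul_mem_sup p.1.2 p.2.2, ?_⟩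
  rintro ⟨x, hx⟩
  obtain ⟨y, z, rfl⟩ := Subgroup.mem_sup'.1 hx
  exact ⟨(y, z), rfl⟩

def IsCyclicWreathQuotient (G : Type u) [Group G] : Prop :=
  ∃ (C : GrpCat.{u}) (l : List GrpCat.{u}), (∀ H ∈ C :: l, Finite H ∧ IsCyclic H) ∧
    ∃ π : descW C l →* G, Surjective π

namespace IsCyclicWreathQuotient

variable {G H : Type u} [Group G] [Group H]

theorem of_surjective (hG : IsCyclicWreathQuotient G) {f : G →* H} (hf : Surjective f) :
    IsCyclicWreathQuotient H :=
  let ⟨C, l, hcl, π, hπ⟩ := hG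
  ⟨C, l, hcl, f.comp π, hf.comp hπ⟩

theorem finite (hG : IsCyclicWreathQuotient G) : Finite G :=
  let ⟨C, l, hcl, π, hπ⟩ := hG
  have := finite_descW C l fun H hH => (hcl H hH).1
  Finite.of_surjective π hπ

theorem punit : IsCyclicWreathQuotient PUnit.{u + 1} :=
  ⟨GrpCat.of PUnit, [], fun _ h => List.mem_singleton.1 h ▸ ⟨inferInstance, inferInstance⟩,
    MonoidHom.id _, surjective_id⟩

theorem wr_of_isCyclic (Z : Type u) [CommGroup Z] [Finite Z] [IsCyclic Z]
    (hG : IsCyclicWreathQuotient G) : IsCyclicWreathQuotient (Wr Z G) := by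
  classical
  obtain ⟨C, l, hcl, π, hπ⟩ := hG
  have := finite_descW C l fun H hH => (hcl H hH).1
  have := Fintype.ofFinite (descW C l)
  refine ⟨GrpCat.of Z, C :: l, ?_, Wr.pushforward π, Wr.pushforward_surjective hπ⟩
  rintro H (_ | ⟨_, hH⟩)
  exacts [⟨‹_›, ‹_›⟩, hcl H hH]

theorem wr_of_subsingleton (Z : Type u) [Group Z] [Subsingleton Z]
    (hG : IsCyclicWreathQuotient G) : IsCyclicWreathQuotient (Wr Z G) :=
  hG.of_surjective (f := inr) fun x => ⟨x.right, SemidirectProduct.ext (Subsingleton.elim _ _) rfl⟩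

theorem wr_prod (Z P : Type u) [CommGroup Z] [Finite Z] [IsCyclic Z] [Group P]
    (hG : IsCyclicWreathQuotient (Wr P G)) : IsCyclicWreathQuotient (Wr (Z × P) G) := by
  classical
  have := hG.finite
  have := Fintype.ofFinite (Wr P G)
  exact (hG.wr_of_isCyclic Z).of_surjective (Wr.wrProd_surjective Z P G)

theorem wr_closure {A : Type u} [CommGroup A] [Finite A] (hG : IsCyclicWreathQuotient G)
    (s : Finset A) : IsCyclicWreathQuotient (Wr (Subgroup.closure (s : Set A)) G) := by
  classical
  induction s using Finset.induction_on with
  | empty =>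
    rw [Finset.coe_empty, Subgroup.closure_empty]
    exact hG.wr_of_subsingleton _
  | insert a s _ ih =>
    rw [Finset.coe_insert, Set.insert_eq, Subgroup.closure_union, ← Subgroup.zpowers_eq_closure]
    obtain ⟨f, hf⟩ := Subgroup.exists_prod_surjective_sup (Subgroup.zpowers a)
      (Subgroup.closure (s : Set A))
    exact (ih.wr_prod _ _).of_surjective (Wr.mapLeft_surjective G hf)

theorem wr_of_commGroup (A : Type u) [CommGroup A] [Finite A] (hG : IsCyclicWreathQuotient G) :
    IsCyclicWreathQuotient (Wr A G) := by
  have := Fintype.ofFinite A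
  have h := hG.wr_closure (Finset.univ : Finset A)
  rw [Finset.coe_univ, Subgroup.closure_univ] at h
  exact h.of_surjective (Wr.mapLeft_surjective G (q := Subgroup.topEquiv.toMonoidHom)
    (MulEquiv.surjective _))

theorem semidirectProduct (A : Type u) [CommGroup A] [Finite A] (φ : G →* MulAut A)
    (hG : IsCyclicWreathQuotient G) : IsCyclicWreathQuotient (A ⋊[φ] G) := by
  have := hG.finite
  have := Fintype.ofFinite G
  exact (hG.wr_of_commGroup A).of_surjective (Wr.toSemidirectProduct_surjective φ)

theorem of_commGroup (A : Type u) [CommGroup A] [Finite A] : IsCyclicWreathQuotient A :=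
  (punit.semidirectProduct A 1).of_surjective
    (f := (MonoidHom.fst A PUnit).comp mulEquivProd.toMonoidHom) fun a => ⟨⟨a, 1⟩, rfl⟩

end IsCyclicWreathQuotient

theorem stmt13_general (G : GrpCat.{u}) (hG : IsSemiabelian G) :
    ∃ (C : GrpCat.{u}) (l : List GrpCat.{u}),
      (∀ H ∈ C :: l, Finite H ∧ IsCyclic H) ∧
      ∃ π : descW C l →* G, Function.Surjective π := by
  induction hG with
  | of_abelian G _ hcomm =>
    let : CommGroup G := { G.str with mul_comm := hcomm }
    exact IsCyclicWreathQuotient.of_commGroup G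
  | of_quotient _ _ f hf _ ih => exact IsCyclicWreathQuotient.of_surjective ih hf
  | of_semidirect G A _ φ _ ih => exact IsCyclicWreathQuotient.semidirectProduct A φ ih

/-- Every finite semiabelian group is a surjective homomorphic
image of a descending iterated standard wreath product of finite cyclic groups. -/
theorem stmt13 (G : GrpCat.{u}) (hfin : Finite G) (hG : IsSemiabelian G) :
    ∃ (C : GrpCat.{u}) (l : List GrpCat.{u}),
      (∀ H ∈ C :: l, Finite H ∧ IsCyclic H) ∧
      ∃ π : descW C l →* G, Function.Surjective π :=
  stmt13_general G hG
end

section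
/- Let C₁, ..., C_r be nontrivial finite cyclic groups. Then the wreath length of G = C₁ ≀ (C₂ ≀ (··· ≀ C_r)···) is exactly r; i.e., G is not a homomorphic image of any descending iterated standard wreath product of fewer than r finite cyclic groups. -/
/-- Wreath length: the least `r ≥ 1` such that `G` is an epimorphic image of a
descending iterated standard wreath product of `r` finite cyclic groups. -/
noncomputable def wl (G : Type u) [Group G] : ℕ :=
  sInf {r | ∃ (C : GrpCat.{u}) (l : List GrpCat.{u}), r = l.length + 1 ∧
    (Finite C ∧ IsCyclic C) ∧ (∀ H ∈ l, Finite H ∧ IsCyclic H) ∧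
    ∃ π : descW C l →* G, Function.Surjective π}

/-!
An iterated wreath product of `s` abelian groups has derived length at most `s`, because the base
group of `C ≀ V` is abelian when `C` is, and derived length does not grow under quotients. So it
suffices that `C₁ ≀ (⋯ ≀ C_r)` has derived length at least `r`, which follows by induction from:
if `C ≠ 1` and `H ⊴ C ≀ V` has abelian `⁅H, H⁆`, then `⁅H, H⁆` lies in the base group. Indeed, let
`δ` be a base element supported at `1` and `⁅w, w'⁆` a commutator with top component `c ≠ 1`.
Comparing components at `1` and `c` shows that `⁅w, w'⁆` commutes neither with its conjugate by `δ`
when `c² ≠ 1`, nor with `⁅δ w δ⁻¹, w'⁆` when `c² = 1`.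
-/

open scoped commutatorElement

section DerivedSeries

variable {G Q : Type*} [Group G] [Group Q]

theorem lt_of_derivedSeries_ne_bot_of_eq_bot {n m : ℕ} (hn : derivedSeries G n ≠ ⊥)
    (hm : derivedSeries G m = ⊥) : n < m := by
  by_contra! hmn
  exact hn (eq_bot_iff.mpr (hm ▸ derivedSeries_antitone G hmn))

theorem derivedSeries_eq_bot_of_surjective {f : G →* Q} (hf : Function.Surjective f) {n : ℕ}
    (h : derivedSeries G n = ⊥) : derivedSeries Q n = ⊥ := by
  rw [← map_derivedSeries_eq hf, h, Subgroup.map_bot]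

theorem derivedSeries_succ_eq_bot_of_isMulCommutative_ker (f : G →* Q) [IsMulCommutative f.ker]
    {n : ℕ} (h : derivedSeries Q n = ⊥) : derivedSeries G (n + 1) = ⊥ := by
  have hker : derivedSeries G n ≤ f.ker := by
    rw [← Subgroup.map_eq_bot_iff, eq_bot_iff, ← h]
    exact map_derivedSeries_le_derivedSeries f n
  rw [derivedSeries_succ, eq_bot_iff, ← Subgroup.commutator_self_eq_bot_iff.mpr ‹_›]
  exact Subgroup.commutator_mono hker hker

theorem SemidirectProduct.derivedSeries_succ_eq_bot {N : Type*} [Group N] [IsMulCommutative N]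
    {φ : G →* MulAut N} {n : ℕ} (h : derivedSeries G n = ⊥) :
    derivedSeries (N ⋊[φ] G) (n + 1) = ⊥ := by
  have : IsMulCommutative (rightHom : N ⋊[φ] G →* G).ker := by
    rw [← range_inl_eq_ker_rightHom]; infer_instance
  exact derivedSeries_succ_eq_bot_of_isMulCommutative_ker rightHom h

theorem eq_one_of_commutatorElement_eq_left {a b : G} (h : ⁅a, b⁆ = a) :
    a = 1 := by
  rwa [commutatorElement_def, mul_assoc, mul_assoc, mul_eq_left, ← mul_assoc, conj_eq_one_iff,
    inv_eq_one] at h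

end DerivedSeries

namespace Wr

open SemidirectProduct

variable {C V : Type*} [Group C] [Group V]

theorem mul_left (a b : Wr C V) (z : V) : (a * b).left z = a.left z * b.left (z * a.right) :=
  rfl

theorem commutatorElement_right (a b : Wr C V) : ⁅a, b⁆.right = ⁅a.right, b.right⁆ :=
  rfl

theorem commutatorElement_left (a b : Wr C V) (z : V) :
    ⁅a, b⁆.left z = a.left z * b.left (z * a.right) *
      (a.left (z * ⁅a.right, b.right⁆ * b.right))⁻¹ * (b.left (z * ⁅a.right, b.right⁆))⁻¹ := by
  have h₁ : z * (a.right * b.right) * a.right⁻¹ = z * ⁅a.right, b.right⁆ * b.right := by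
    rw [commutatorElement_def]; group
  have h₂ : z * (a.right * b.right * a.right⁻¹) * b.right⁻¹ = z * ⁅a.right, b.right⁆ := by
    rw [commutatorElement_def]; group
  rw [← h₁, ← h₂]
  rfl

theorem conj_inl_right (g : V → C) (a : Wr C V) : (inl g * a * (inl g)⁻¹).right = a.right := by
  simp

theorem conj_inl_left (g : V → C) (a : Wr C V) (z : V) :
    (inl g * a * (inl g)⁻¹).left z = g z * a.left z * (g (z * a.right))⁻¹ := by
  simp [mul_left]

theorem left_one_mul_left_eq_of_commute {a b : Wr C V} (hab : Commute a b) {c : V}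
    (ha : a.right = c) (hb : b.right = c) : a.left 1 * b.left c = b.left 1 * a.left c := by
  simpa [mul_left, ha, hb] using congrFun (congrArg left hab.eq) 1

theorem not_commute_of_left_one_eq_mul {t : C} (ht : t ≠ 1) {a b : Wr C V} {c : V}
    (ha : a.right = c) (hb : b.right = c) (h₁ : b.left 1 = t * a.left 1)
    (hc : b.left c = a.left c) : ¬ Commute a b := by
  intro hab
  have := left_one_mul_left_eq_of_commute hab ha hb
  rw [h₁, hc, mul_assoc] at this
  exact ht (right_eq_mul.mp this)

theorem not_commute_conj_mulSingle [DecidableEq V] {t : C} (ht : t ≠ 1) {a : Wr C V}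
    (h₁ : a.right ≠ 1) (h₂ : a.right * a.right ≠ 1) :
    ¬ Commute a (inl (Pi.mulSingle 1 t) * a * (inl (Pi.mulSingle 1 t))⁻¹) := by
  refine not_commute_of_left_one_eq_mul ht rfl (conj_inl_right _ _) ?_ ?_ <;>
    simp [conj_inl_left, Pi.mulSingle_eq_of_ne, h₁, h₂]

theorem not_commute_commutatorElement_conj_mulSingle [DecidableEq V] {t : C} (ht : t ≠ 1)
    {w w' : Wr C V} (hc : ⁅w.right, w'.right⁆ ≠ 1)
    (hcc : ⁅w.right, w'.right⁆ * ⁅w.right, w'.right⁆ = 1) :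
    ¬ Commute ⁅w, w'⁆ ⁅inl (Pi.mulSingle 1 t) * w * (inl (Pi.mulSingle 1 t))⁻¹, w'⁆ := by
  generalize hy : w.right = y at hc hcc
  generalize hy' : w'.right = y' at hc hcc
  -- the points other than `1` and `c` at which the two components evaluate `Pi.mulSingle 1 t`
  have hy₁ : y ≠ 1 := by rintro rfl; simp at hc
  have hy'₁ : y' ≠ 1 := by rintro rfl; simp at hc
  have hy'y : y' * y ≠ 1 := by
    intro h; rw [mul_eq_one_iff_eq_inv] at h; simp [h, commutatorElement_def] at hc
  have hcy : ⁅y, y'⁆ * y ≠ 1 := fun h =>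
    hy₁ (eq_one_of_commutatorElement_eq_left (mul_left_cancel (h.trans hcc.symm)).symm)
  have hcy' : ⁅y, y'⁆ * y' ≠ 1 := by
    intro h; rw [commutatorElement_def, inv_mul_cancel_right, conj_eq_one_iff] at h; exact hy'₁ h
  have hcy'y : ⁅y, y'⁆ * y' * y ≠ 1 := by
    rw [show ⁅y, y'⁆ * y' * y = y * y' by rw [commutatorElement_def]; group]
    intro h; rw [mul_eq_one_iff_eq_inv] at h; simp [h, commutatorElement_def] at hc
  refine not_commute_of_left_one_eq_mul (c := ⁅y, y'⁆) ht
    (by rw [commutatorElement_right, hy, hy'])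
    (by rw [commutatorElement_right, conj_inl_right, hy, hy']) ?_ ?_ <;>
    rw [commutatorElement_left, commutatorElement_left, conj_inl_left, conj_inl_left,
      conj_inl_right, hy, hy']
  · simp only [one_mul, Pi.mulSingle_eq_same, Pi.mulSingle_eq_of_ne hy₁, Pi.mulSingle_eq_of_ne hcy',
      Pi.mulSingle_eq_of_ne hcy'y, inv_one, mul_one]
    simp only [mul_assoc]
  · simp only [hcc, one_mul, Pi.mulSingle_eq_of_ne hc, Pi.mulSingle_eq_of_ne hcy,
      Pi.mulSingle_eq_of_ne hy'₁, Pi.mulSingle_eq_of_ne hy'y, inv_one, mul_one]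

theorem not_commute_inl_mulSingle_inr [DecidableEq V] {t : C} (ht : t ≠ 1) {x : V} (hx : x ≠ 1) :
    ¬ Commute (inl (Pi.mulSingle 1 t) : Wr C V) (inr x) := by
  intro h
  exact ht (by simpa [mul_left, Pi.mulSingle_eq_of_ne hx] using congrFun (congrArg left h.eq) 1)

theorem commutator_le_ker_rightHom [Nontrivial C] (H : Subgroup (Wr C V)) [H.Normal]
    [IsMulCommutative ↥⁅H, H⁆] : ⁅H, H⁆ ≤ (rightHom : Wr C V →* V).ker := by
  classical
  obtain ⟨t, ht⟩ := exists_ne (1 : C)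
  refine Subgroup.commutator_le.mpr fun w hw w' hw' => ?_
  rw [MonoidHom.mem_ker, rightHom_eq_right, commutatorElement_right]
  by_contra hc
  have hA : ⁅w, w'⁆ ∈ ⁅H, H⁆ := Subgroup.commutator_mem_commutator hw hw'
  by_cases hcc : ⁅w.right, w'.right⁆ * ⁅w.right, w'.right⁆ = 1
  · have hA' := Subgroup.commutator_mem_commutator (Subgroup.Normal.conj_mem ‹_› w hw
      (inl (Pi.mulSingle 1 t))) hw'
    exact not_commute_commutatorElement_conj_mulSingle ht hc hcc (setLike_mul_comm hA hA')
  · exact not_commute_conj_mulSingle ht hc hcc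
      (setLike_mul_comm hA (Subgroup.Normal.conj_mem inferInstance _ hA _))

theorem derivedSeries_succ_ne_bot [Nontrivial C] {n : ℕ} (h : derivedSeries V n ≠ ⊥) :
    derivedSeries (Wr C V) (n + 1) ≠ ⊥ := by
  intro hW
  have : IsMulCommutative (derivedSeries (Wr C V) n) := by
    rwa [← Subgroup.commutator_self_eq_bot_iff, ← derivedSeries_succ]
  cases n with
  | zero =>
    classical
    obtain ⟨t, ht⟩ := exists_ne (1 : C)
    obtain ⟨x, hx⟩ : ∃ x : V, x ≠ 1 := by simpa [Subgroup.ne_bot_iff_exists_ne_one] using h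
    exact not_commute_inl_mulSingle_inr ht hx
      (setLike_mul_comm (s := derivedSeries (Wr C V) 0) (Subgroup.mem_top _) (Subgroup.mem_top _))
  | succ m =>
    rw [derivedSeries_succ] at this
    apply h
    rw [← map_derivedSeries_eq (rightHom_surjective (φ := wrAut C V)), Subgroup.map_eq_bot_iff]
    exact commutator_le_ker_rightHom (derivedSeries (Wr C V) m)

end Wr

theorem derivedSeries_descW_length_succ_eq_bot (C : GrpCat.{u}) [IsMulCommutative C]
    (l : List GrpCat.{u}) (hl : ∀ H ∈ l, IsMulCommutative H) :
    derivedSeries (descW C l) (l.length + 1) = ⊥ := by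
  induction l generalizing C with
  | nil =>
    rw [descW, List.length_nil, derivedSeries_one, commutator_def,
      Subgroup.commutator_self_eq_bot_iff]
    infer_instance
  | cons H t ih =>
    have := hl H List.mem_cons_self
    exact SemidirectProduct.derivedSeries_succ_eq_bot
      (ih H fun K hK => hl K (List.mem_cons_of_mem H hK))

theorem derivedSeries_descW_length_ne_bot (C : GrpCat.{u}) [Nontrivial C] (l : List GrpCat.{u})
    (hl : ∀ H ∈ l, Nontrivial H) : derivedSeries (descW C l) l.length ≠ ⊥ := by
  induction l generalizing C with
  | nil =>
    rw [descW, List.length_nil, derivedSeries_zero]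
    exact top_ne_bot
  | cons H t ih =>
    have := hl H List.mem_cons_self
    exact Wr.derivedSeries_succ_ne_bot (ih H fun K hK => hl K (List.mem_cons_of_mem H hK))

/-- The wreath length of a descending iterated standard wreath
product of `r` nontrivial finite cyclic groups (head `C₁` and tail list of length
`r - 1`) is exactly `r`: it is not a homomorphic image of a descending iterated
wreath product of fewer than `r` finite cyclic groups. -/
theorem stmt14 (C₁ : GrpCat.{u}) (l : List GrpCat.{u})
    (h : ∀ H ∈ C₁ :: l, Finite H ∧ IsCyclic H ∧ Nontrivial H) :
    wl (descW C₁ l) = l.length + 1 := by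
  have hC₁ := h C₁ List.mem_cons_self
  have hl : ∀ H ∈ l, Finite H ∧ IsCyclic H ∧ Nontrivial H :=
    fun H hH => h H (List.mem_cons_of_mem C₁ hH)
  refine IsLeast.csInf_eq ⟨⟨C₁, l, rfl, ⟨hC₁.1, hC₁.2.1⟩, fun H hH => ⟨(hl H hH).1, (hl H hH).2.1⟩,
    MonoidHom.id _, Function.surjective_id⟩, ?_⟩
  rintro _ ⟨C, l', rfl, ⟨-, hC⟩, hl', π, hπ⟩
  have hsource := derivedSeries_descW_length_succ_eq_bot C l' fun H hH =>
    (hl' H hH).2.isMulCommutative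
  have : Nontrivial C₁ := hC₁.2.2
  exact lt_of_derivedSeries_ne_bot_of_eq_bot
    (derivedSeries_descW_length_ne_bot C₁ l fun H hH => (hl H hH).2.2)
    (derivedSeries_eq_bot_of_surjective hπ hsource)
end
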